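/- arXiv:2202.13104 — 4 statements merged into one kernel-verified Lean document; each statement's English description precedes it below -/
import Mathlib

section
/- For every real x with 0 < x < 1, the payoff difference in the IPGG satisfies f_C(x) − f_D(x) = F·c/N − c + (1−α)·β·τ·r_p · ∑_{k=0}^{N−2} x^k − α·β·τ·r_p · ∑_{k=0}^{N−2} (1−x)^k. -/
/-- IPGG payoff of a focal cooperator when k of the other N−1 group members cooperate. -/
noncomputable def piC (N : ℕ) (b c τ β rp α F : ℝ) (k : ℕ) : ℝ :=
  b + F * c * ((k : ℝ) + 1) / N - c - τ -
    α * β * τ * rp * ((if 1 ≤ k then (1 : ℝ) else 0) + ((N : ℝ) - 1 - k) / ((k : ℝ) + 1))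

/-- IPGG payoff of a focal defector when k of the other N−1 group members cooperate. -/
noncomputable def piD (N : ℕ) (b c τ β rp α F : ℝ) (k : ℕ) : ℝ :=
  b + F * c * (k : ℝ) / N - τ -
    (1 - α) * β * τ * rp * ((k : ℝ) / ((N : ℝ) - k) + (if k ≤ N - 2 then (1 : ℝ) else 0))

/-- Average payoff of cooperators in the IPGG at cooperator frequency x. -/
noncomputable def fC (N : ℕ) (b c τ β rp α F : ℝ) (x : ℝ) : ℝ :=
  ∑ k ∈ Finset.range N,
    ((N - 1).choose k : ℝ) * x ^ k * (1 - x) ^ (N - 1 - k) * piC N b c τ β rp α F k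

/-- Average payoff of defectors in the IPGG at cooperator frequency x. -/
noncomputable def fD (N : ℕ) (b c τ β rp α F : ℝ) (x : ℝ) : ℝ :=
  ∑ k ∈ Finset.range N,
    ((N - 1).choose k : ℝ) * x ^ k * (1 - x) ^ (N - 1 - k) * piD N b c τ β rp α F k

/-!
The payoffs are averaged against the Bernstein weights `C(N-1,k) x^k (1-x)^(N-1-k)`, which sum
to one; this produces `F c / N - c`. Using `C(n,j+1) (j+1) = C(n,j) (n-j)`, the defector's
punishment term splits as `x S + (1 - x) S = S` with `S = ∑_{j<n} C(n,j) x^j (1-x)^(n-1-j)`, and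
`S` is the geometric sum `∑_{j<n} x^j`: both sides times `1 - x` equal `1 - x^n` by the binomial
theorem, and continuity covers `x = 1`. The cooperator's punishment term is the defector's one
under the reflection `k ↦ N - 1 - k`, `x ↦ 1 - x`.
-/

open Finset Polynomial

section Bernstein

variable {R : Type*} [CommRing R]

lemma eval_bernsteinPolynomial (n ν : ℕ) (x : R) :
    (bernsteinPolynomial R n ν).eval x = n.choose ν * x ^ ν * (1 - x) ^ (n - ν) := by
  simp [bernsteinPolynomial]

lemma sum_eval_bernsteinPolynomial (n : ℕ) (x : R) :
    ∑ ν ∈ range (n + 1), (bernsteinPolynomial R n ν).eval x = 1 := by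
  simpa [eval_finsetSum] using congrArg (eval x) (bernsteinPolynomial.sum R n)

lemma eval_bernsteinPolynomial_sub {n ν : ℕ} (h : ν ≤ n) (x : R) :
    (bernsteinPolynomial R n (n - ν)).eval x = (bernsteinPolynomial R n ν).eval (1 - x) := by
  rw [← bernsteinPolynomial.flip R n ν h, eval_comp]
  simp

end Bernstein

lemma sum_range_choose_mul_pow_mul_one_sub_pow_eq_geom_sum (n : ℕ) (x : ℝ) :
    ∑ j ∈ range n, (n.choose j : ℝ) * x ^ j * (1 - x) ^ (n - 1 - j) = ∑ j ∈ range n, x ^ j := by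
  suffices h : Set.EqOn
      (fun x : ℝ ↦ ∑ j ∈ range n, (n.choose j : ℝ) * x ^ j * (1 - x) ^ (n - 1 - j))
      (fun x ↦ ∑ j ∈ range n, x ^ j) {1}ᶜ from
    congrFun (Continuous.ext_on (dense_compl_singleton 1) (by fun_prop) (by fun_prop) h) x
  intro x hx
  refine mul_right_cancel₀ (sub_ne_zero.mpr (Ne.symm hx)) ?_
  have hbern := sum_eval_bernsteinPolynomial n x
  rw [sum_range_succ, eval_bernsteinPolynomial] at hbern
  simp only [Nat.choose_self, Nat.cast_one, one_mul, Nat.sub_self, pow_zero, mul_one] at hbern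
  calc (∑ j ∈ range n, (n.choose j : ℝ) * x ^ j * (1 - x) ^ (n - 1 - j)) * (1 - x)
      = ∑ j ∈ range n, (bernsteinPolynomial ℝ n j).eval x := by
        rw [sum_mul]
        refine sum_congr rfl fun j hj ↦ ?_
        rw [eval_bernsteinPolynomial, mul_assoc, ← pow_succ,
          show n - 1 - j + 1 = n - j by have := mem_range.mp hj; omega]
    _ = 1 - x ^ n := eq_sub_of_add_eq hbern
    _ = (∑ j ∈ range n, x ^ j) * (1 - x) := (geom_sum_mul_neg x n).symm

noncomputable def defectorFine (N k : ℕ) : ℝ :=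
  (k : ℝ) / ((N : ℝ) - k) + if k ≤ N - 2 then 1 else 0

noncomputable def cooperatorFine (N k : ℕ) : ℝ :=
  (if 1 ≤ k then 1 else 0) + ((N : ℝ) - 1 - k) / ((k : ℝ) + 1)

lemma cooperatorFine_reflect {N j : ℕ} (hN : 2 ≤ N) (hj : j < N) :
    cooperatorFine N (N - 1 - j) = defectorFine N j := by
  have hsplit : (if 1 ≤ N - 1 - j then (1 : ℝ) else 0) = if j ≤ N - 2 then 1 else 0 :=
    if_congr (by omega) rfl rfl
  rw [cooperatorFine, defectorFine, hsplit, add_comm, Nat.cast_sub (by omega),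
    Nat.cast_sub (by omega)]
  push_cast
  ring_nf

lemma sum_eval_bernsteinPolynomial_mul_defectorFine {N : ℕ} (hN : 2 ≤ N) (x : ℝ) :
    ∑ k ∈ range N, (bernsteinPolynomial ℝ (N - 1) k).eval x * defectorFine N k
      = ∑ k ∈ range (N - 1), x ^ k := by
  obtain ⟨n, rfl⟩ : ∃ n, N = n + 2 := ⟨N - 2, by omega⟩
  rw [show n + 2 - 1 = n + 1 from rfl]
  set s : ℕ → ℝ := fun j ↦ ((n + 1).choose j : ℝ) * x ^ j * (1 - x) ^ (n - j)
  have hshift : ∀ j ∈ range (n + 1), (bernsteinPolynomial ℝ (n + 1) (j + 1)).eval x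
      * (((j + 1 : ℕ) : ℝ) / (((n + 2 : ℕ) : ℝ) - (j + 1 : ℕ))) = x * s j := by
    intro j hj
    have hjn : j < n + 1 := mem_range.mp hj
    have hchoose := Nat.choose_succ_right_eq (n + 1) j
    rw [eval_bernsteinPolynomial, show n + 1 - (j + 1) = n - j by omega]
    have hden : (((n + 2 : ℕ) : ℝ) - (j + 1 : ℕ)) ≠ 0 := by
      rw [← Nat.cast_sub (by omega)]; exact Nat.cast_ne_zero.mpr (by omega)
    have hcast : ((n + 1).choose (j + 1) : ℝ) * ((j + 1 : ℕ) : ℝ)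
        = ((n + 1).choose j : ℝ) * (((n + 2 : ℕ) : ℝ) - (j + 1 : ℕ)) := by
      rw [← Nat.cast_sub (by omega), show n + 2 - (j + 1) = n + 1 - j by omega]
      exact_mod_cast hchoose
    field_simp
    linear_combination x ^ (j + 1) * (1 - x) ^ (n - j) * hcast
  have hlast : ∀ k ∈ range (n + 1), (bernsteinPolynomial ℝ (n + 1) k).eval x = (1 - x) * s k := by
    intro k hk
    rw [eval_bernsteinPolynomial, show n + 1 - k = n - k + 1 by have := mem_range.mp hk; omega]
    ring
  have hratioSum : ∑ k ∈ range (n + 2), (bernsteinPolynomial ℝ (n + 1) k).eval x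
      * ((k : ℝ) / (((n + 2 : ℕ) : ℝ) - k)) = x * ∑ j ∈ range (n + 1), s j := by
    rw [sum_range_succ', sum_congr rfl hshift, mul_sum]
    simp
  have hindicatorSum : ∑ k ∈ range (n + 2), (bernsteinPolynomial ℝ (n + 1) k).eval x
      * (if k ≤ n + 2 - 2 then 1 else 0) = (1 - x) * ∑ j ∈ range (n + 1), s j := by
    rw [sum_range_succ, mul_sum, show n + 2 - 2 = n from rfl, if_neg (by omega), mul_zero, add_zero]
    refine sum_congr rfl fun k hk ↦ ?_
    rw [if_pos (Nat.lt_succ_iff.mp (mem_range.mp hk)), mul_one, hlast k hk]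
  simp only [defectorFine, mul_add, sum_add_distrib, hratioSum, hindicatorSum]
  rw [← add_mul, add_sub_cancel, one_mul]
  exact sum_range_choose_mul_pow_mul_one_sub_pow_eq_geom_sum (n + 1) x

lemma sum_eval_bernsteinPolynomial_mul_cooperatorFine {N : ℕ} (hN : 2 ≤ N) (x : ℝ) :
    ∑ k ∈ range N, (bernsteinPolynomial ℝ (N - 1) k).eval x * cooperatorFine N k
      = ∑ k ∈ range (N - 1), (1 - x) ^ k := by
  rw [← sum_range_reflect, ← sum_eval_bernsteinPolynomial_mul_defectorFine hN (1 - x)]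
  refine sum_congr rfl fun j hj ↦ ?_
  have hjN := mem_range.mp hj
  rw [eval_bernsteinPolynomial_sub (by omega), cooperatorFine_reflect hN hjN]

lemma piC_sub_piD (N : ℕ) (b c τ β rp α F : ℝ) (k : ℕ) :
    piC N b c τ β rp α F k - piD N b c τ β rp α F k
      = F * c / N - c + (1 - α) * β * τ * rp * defectorFine N k
        - α * β * τ * rp * cooperatorFine N k := by
  simp only [piC, piD, defectorFine, cooperatorFine]
  ring

theorem ipgg_payoff_difference_general (N : ℕ) (hN : 2 ≤ N) (b c τ β rp α F : ℝ) (x : ℝ) :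
    fC N b c τ β rp α F x - fD N b c τ β rp α F x
      = F * c / N - c
        + (1 - α) * β * τ * rp * (∑ k ∈ Finset.range (N - 1), x ^ k)
        - α * β * τ * rp * (∑ k ∈ Finset.range (N - 1), (1 - x) ^ k) := by
  set w : ℕ → ℝ := fun k ↦ (bernsteinPolynomial ℝ (N - 1) k).eval x
  have hw : ∑ k ∈ range N, w k = 1 := by
    simpa [show N - 1 + 1 = N by omega] using sum_eval_bernsteinPolynomial (N - 1) x
  have hterm : ∀ k, w k * (piC N b c τ β rp α F k - piD N b c τ β rp α F k)
      = (F * c / N - c) * w k + (1 - α) * β * τ * rp * (w k * defectorFine N k)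
        - α * β * τ * rp * (w k * cooperatorFine N k) := by
    intro k
    rw [piC_sub_piD]
    ring
  calc fC N b c τ β rp α F x - fD N b c τ β rp α F x
      = ∑ k ∈ range N, w k * (piC N b c τ β rp α F k - piD N b c τ β rp α F k) := by
        simp only [fC, fD, w, eval_bernsteinPolynomial, ← sum_sub_distrib, mul_sub]
    _ = _ := by
        simp only [hterm, sum_add_distrib, sum_sub_distrib, ← mul_sum, hw, mul_one, w,
          sum_eval_bernsteinPolynomial_mul_defectorFine hN,
          sum_eval_bernsteinPolynomial_mul_cooperatorFine hN]

/-- Payoff difference in the IPGG for x ∈ (0,1):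
f_C(x) − f_D(x) = F·c/N − c + (1−α)·β·τ·r_p·∑_{k=0}^{N−2} x^k − α·β·τ·r_p·∑_{k=0}^{N−2} (1−x)^k. -/
theorem ipgg_payoff_difference (N : ℕ) (hN : 2 ≤ N) (b c τ β rp α F : ℝ)
    (hc : 0 < c) (hτ : 0 < τ) (hβ : 0 < β) (hrp : 0 < rp) (hα0 : 0 ≤ α) (hα1 : α ≤ 1)
    (x : ℝ) (hx : 0 < x) (hx1 : x < 1) :
    fC N b c τ β rp α F x - fD N b c τ β rp α F x
      = F * c / N - c
        + (1 - α) * β * τ * rp * (∑ k ∈ Finset.range (N - 1), x ^ k)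
        - α * β * τ * rp * (∑ k ∈ Finset.range (N - 1), (1 - x) ^ k) :=
  ipgg_payoff_difference_general N hN b c τ β rp α F x
end

section
/- If F_min < F < F_max, then there exists a unique x* ∈ (0,1) with Q(x*) = 0; moreover Q(x) < 0 for all x ∈ (0, x*) and Q(x) > 0 for all x ∈ (x*, 1), so that for the replicator dynamics ẋ = x(1−x)Q(x) the interior equilibrium x* is unstable and both boundary states x = 0 and x = 1 are attracting (bistability). -/
/-- The IPGG gradient function Q. -/
noncomputable def Qipgg (N : ℕ) (c τ β rp α F : ℝ) (x : ℝ) : ℝ :=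
  F * c / N - c - 2 * α * β * τ * rp + β * τ * rp
    - α * β * τ * rp * (∑ k ∈ Finset.range (N - 1), (1 - x) ^ (k + 1))
    + (1 - α) * β * τ * rp * (∑ k ∈ Finset.range (N - 1), x ^ (k + 1))

/-- The lower threshold F_min for the pool multiplier in the IPGG. -/
noncomputable def Fmin (N : ℕ) (c τ β rp α : ℝ) : ℝ :=
  N * (c - β * τ * rp + 2 * α * β * τ * rp - (1 - α) * β * τ * rp * ((N : ℝ) - 1)) / c

/-- The upper threshold F_max for the pool multiplier in the IPGG. -/
noncomputable def Fmax (N : ℕ) (c τ β rp α : ℝ) : ℝ :=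
  N * (c - β * τ * rp + α * β * τ * rp * ((N : ℝ) + 1)) / c

/-! The thresholds are exactly the values of `F` at which `Q` vanishes at an endpoint:
`Q 0 = c/N (F - F_max)` and `Q 1 = c/N (F - F_min)`. Since `Q` is strictly increasing on
`[0, 1]` (its two power sums move in the same direction, with slope at least `β τ r_p`),
`F_min < F < F_max` gives `Q 0 < 0 < Q 1`, and the intermediate value theorem yields a
single sign change. -/

open Finset Set

theorem StrictMonoOn.exists_unique_sign_change {f : ℝ → ℝ} {a b : ℝ} (hab : a ≤ b)
    (hcont : ContinuousOn f (Icc a b)) (hmono : StrictMonoOn f (Icc a b))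
    (ha : f a < 0) (hb : 0 < f b) :
    ∃ x ∈ Ioo a b, f x = 0 ∧ (∀ y ∈ Ioo a b, f y = 0 → y = x) ∧
      (∀ y ∈ Ioo a x, f y < 0) ∧ (∀ y ∈ Ioo x b, 0 < f y) := by
  obtain ⟨x, hx, hfx⟩ := intermediate_value_Ioo hab hcont ⟨ha, hb⟩
  have hxI : x ∈ Icc a b := Ioo_subset_Icc_self hx
  refine ⟨x, hx, hfx, fun y hy hfy => hmono.injOn (Ioo_subset_Icc_self hy) hxI (hfy.trans hfx.symm),
    fun y hy => ?_, fun y hy => ?_⟩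
  · rw [← hfx]
    exact hmono ⟨hy.1.le, hy.2.le.trans hxI.2⟩ hxI hy.2
  · rw [← hfx]
    exact hmono hxI ⟨hxI.1.trans hy.1.le, hy.2.le⟩ hy.1

theorem sub_le_sum_pow_succ_sub_sum_pow_succ {n : ℕ} (hn : 1 ≤ n) {x y : ℝ} (hx : 0 ≤ x)
    (hxy : x ≤ y) :
    y - x ≤ ∑ k ∈ range n, y ^ (k + 1) - ∑ k ∈ range n, x ^ (k + 1) := by
  rw [← sum_sub_distrib]
  simpa using single_le_sum (f := fun k => y ^ (k + 1) - x ^ (k + 1))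
    (fun k _ => sub_nonneg.mpr (pow_le_pow_left₀ hx hxy (k + 1))) (mem_range.2 hn)

section Qipgg

variable {N : ℕ} {c τ β rp α : ℝ}

theorem continuous_Qipgg (F : ℝ) : Continuous (Qipgg N c τ β rp α F) := by
  unfold Qipgg
  fun_prop

theorem Qipgg_strictMonoOn (hN : 2 ≤ N) (hk : 0 < β * τ * rp) (hα0 : 0 ≤ α) (hα1 : α ≤ 1)
    (F : ℝ) : StrictMonoOn (Qipgg N c τ β rp α F) (Icc 0 1) := by
  intro x hx y hy hxy
  have hdefect := sub_le_sum_pow_succ_sub_sum_pow_succ (n := N - 1) (by omega)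
    (sub_nonneg.mpr hy.2) (sub_le_sub_left hxy.le 1)
  have hcoop := sub_le_sum_pow_succ_sub_sum_pow_succ (n := N - 1) (by omega) hx.1 hxy.le
  have hdiff : Qipgg N c τ β rp α F y - Qipgg N c τ β rp α F x =
      α * (β * τ * rp) * (∑ k ∈ range (N - 1), (1 - x) ^ (k + 1)
          - ∑ k ∈ range (N - 1), (1 - y) ^ (k + 1))
        + (1 - α) * (β * τ * rp) * (∑ k ∈ range (N - 1), y ^ (k + 1)
          - ∑ k ∈ range (N - 1), x ^ (k + 1)) := by
    unfold Qipgg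
    ring
  have hα : 0 ≤ α * (β * τ * rp) := mul_nonneg hα0 hk.le
  have hα' : 0 ≤ (1 - α) * (β * τ * rp) := mul_nonneg (sub_nonneg.mpr hα1) hk.le
  nlinarith [mul_le_mul_of_nonneg_left hdefect hα, mul_le_mul_of_nonneg_left hcoop hα',
    mul_pos hk (sub_pos.mpr hxy)]

theorem Qipgg_zero (hN : 1 ≤ N) (hc : c ≠ 0) (F : ℝ) :
    Qipgg N c τ β rp α F 0 = c / N * (F - Fmax N c τ β rp α) := by
  have hN0 : (N : ℝ) ≠ 0 := by positivity
  simp only [Qipgg, Fmax, sub_zero, one_pow, sum_const, card_range, nsmul_eq_mul, ne_eq,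
    Nat.add_one_ne_zero, not_false_eq_true, zero_pow, Nat.cast_sub hN]
  field_simp
  ring

theorem Qipgg_one (hN : 1 ≤ N) (hc : c ≠ 0) (F : ℝ) :
    Qipgg N c τ β rp α F 1 = c / N * (F - Fmin N c τ β rp α) := by
  have hN0 : (N : ℝ) ≠ 0 := by positivity
  simp only [Qipgg, Fmin, sub_self, one_pow, sum_const, card_range, nsmul_eq_mul, ne_eq,
    Nat.add_one_ne_zero, not_false_eq_true, zero_pow, Nat.cast_sub hN]
  field_simp
  ring

end Qipgg

/-- If F_min < F < F_max then Q has a unique zero x* in (0,1), with Q < 0 on (0,x*)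
and Q > 0 on (x*,1): the interior equilibrium x* of the replicator dynamics
ẋ = x(1−x)Q(x) is unstable and both boundary states x = 0, x = 1 are attracting. -/
theorem ipgg_bistability (N : ℕ) (hN : 2 ≤ N) (c τ β rp α F : ℝ)
    (hc : 0 < c) (hτ : 0 < τ) (hβ : 0 < β) (hrp : 0 < rp) (hα0 : 0 ≤ α) (hα1 : α ≤ 1)
    (hFlo : Fmin N c τ β rp α < F) (hFhi : F < Fmax N c τ β rp α) :
    ∃ xs : ℝ, 0 < xs ∧ xs < 1 ∧ Qipgg N c τ β rp α F xs = 0 ∧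
      (∀ y : ℝ, 0 < y → y < 1 → Qipgg N c τ β rp α F y = 0 → y = xs) ∧
      (∀ x : ℝ, 0 < x → x < xs → Qipgg N c τ β rp α F x < 0) ∧
      (∀ x : ℝ, xs < x → x < 1 → 0 < Qipgg N c τ β rp α F x) := by
  have hcN : 0 < c / N := div_pos hc (by positivity)
  have hQ0 : Qipgg N c τ β rp α F 0 < 0 := by
    rw [Qipgg_zero (by omega) hc.ne']
    exact mul_neg_of_pos_of_neg hcN (sub_neg.mpr hFhi)
  have hQ1 : 0 < Qipgg N c τ β rp α F 1 := by
    rw [Qipgg_one (by omega) hc.ne']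
    exact mul_pos hcN (sub_pos.mpr hFlo)
  obtain ⟨xs, hxs, hzero, huniq, hneg, hpos⟩ :=
    (Qipgg_strictMonoOn hN (by positivity) hα0 hα1 F).exists_unique_sign_change zero_le_one
      (continuous_Qipgg F).continuousOn hQ0 hQ1
  exact ⟨xs, hxs.1, hxs.2, hzero, fun y hy0 hy1 => huniq y ⟨hy0, hy1⟩,
    fun x hx0 hx => hneg x ⟨hx0, hx⟩, fun x hx hx1 => hpos x ⟨hx, hx1⟩⟩
end

section
/- The interior equilibrium of the IPGG decreases as the pool multiplier increases: if F₁ < F₂ with F_min < F₁ and F₂ < F_max, and x₁*, x₂* ∈ (0,1) are zeros of Q_{F₁} and Q_{F₂} respectively, then x₂* < x₁*. (Hence increasing F enlarges the basin of attraction of full cooperation.) -/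
/-!
`Q_F(x)` is strictly increasing in `F` (through the term `F c / N`) and nondecreasing in `x` on
`[0, 1]` (each power sum moves in the right direction and carries a nonnegative weight). So if the
equilibria satisfied `x₁ ≤ x₂`, then `0 = Q_{F₁}(x₁) < Q_{F₂}(x₁) ≤ Q_{F₂}(x₂) = 0`.
-/

open Set

theorem Qipgg_strictMono_F {N : ℕ} (hN : N ≠ 0) {c : ℝ} (hc : 0 < c) (τ β rp α x : ℝ) :
    StrictMono fun F => Qipgg N c τ β rp α F x := by
  intro F₁ F₂ hF
  have hN' : (0 : ℝ) < N := by positivity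
  simp only [Qipgg]
  gcongr

theorem Qipgg_monotoneOn (N : ℕ) (c : ℝ) {τ β rp α : ℝ} (hτ : 0 ≤ τ) (hβ : 0 ≤ β) (hrp : 0 ≤ rp)
    (hα0 : 0 ≤ α) (hα1 : α ≤ 1) (F : ℝ) : MonotoneOn (Qipgg N c τ β rp α F) (Icc 0 1) := by
  rintro a ⟨ha0, -⟩ b ⟨-, hb1⟩ hab
  have hα1' : 0 ≤ 1 - α := sub_nonneg.mpr hα1
  unfold Qipgg
  gcongr

theorem ipgg_equilibrium_decreasing_in_F_general (N : ℕ) (hN : 2 ≤ N) (c τ β rp α : ℝ)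
    (hc : 0 < c) (hτ : 0 < τ) (hβ : 0 < β) (hrp : 0 < rp) (hα0 : 0 ≤ α) (hα1 : α ≤ 1)
    (F₁ F₂ : ℝ) (hF12 : F₁ < F₂)
    (x₁ x₂ : ℝ) (hx₁ : 0 < x₁) (hx₂' : x₂ < 1)
    (hQ₁ : Qipgg N c τ β rp α F₁ x₁ = 0) (hQ₂ : Qipgg N c τ β rp α F₂ x₂ = 0) :
    x₂ < x₁ := by
  by_contra! h
  have hmono := Qipgg_monotoneOn N c hτ.le hβ.le hrp.le hα0 hα1 F₂
  have : (0 : ℝ) < 0 :=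
    calc 0 = Qipgg N c τ β rp α F₁ x₁ := hQ₁.symm
      _ < Qipgg N c τ β rp α F₂ x₁ := Qipgg_strictMono_F (by omega) hc τ β rp α x₁ hF12
      _ ≤ Qipgg N c τ β rp α F₂ x₂ :=
        hmono ⟨hx₁.le, by linarith⟩ ⟨by linarith, hx₂'.le⟩ h
      _ = 0 := hQ₂
  exact lt_irrefl 0 this

/-- The interior equilibrium of the IPGG decreases as the pool multiplier increases:
if F₁ < F₂ with F_min < F₁ and F₂ < F_max, and x₁*, x₂* ∈ (0,1) are zeros of
Q_{F₁} and Q_{F₂} respectively, then x₂* < x₁*. -/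
theorem ipgg_equilibrium_decreasing_in_F (N : ℕ) (hN : 2 ≤ N) (c τ β rp α : ℝ)
    (hc : 0 < c) (hτ : 0 < τ) (hβ : 0 < β) (hrp : 0 < rp) (hα0 : 0 ≤ α) (hα1 : α ≤ 1)
    (F₁ F₂ : ℝ) (hF12 : F₁ < F₂)
    (hFlo : Fmin N c τ β rp α < F₁) (hFhi : F₂ < Fmax N c τ β rp α)
    (x₁ x₂ : ℝ) (hx₁ : 0 < x₁) (hx₁' : x₁ < 1) (hx₂ : 0 < x₂) (hx₂' : x₂ < 1)
    (hQ₁ : Qipgg N c τ β rp α F₁ x₁ = 0) (hQ₂ : Qipgg N c τ β rp α F₂ x₂ = 0) :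
    x₂ < x₁ :=
  ipgg_equilibrium_decreasing_in_F_general N hN c τ β rp α hc hτ hβ hrp hα0 hα1 F₁ F₂ hF12 x₁ x₂ hx₁
    hx₂' hQ₁ hQ₂
end

section
/- For every real x with 0 < x ≤ 1, the average payoff of cooperators in the bribery game satisfies f̄_C(x) = b + F·c·((N−1)·x + 1)/N − c − τ − α·β·τ·r_p·(1 − (1−x)^{N−1})/x − ((N−1)/N)·p·γ·h + ((N−1)/N)·γ·h·(p·x + q·(1−x)). -/
/-!
With n = N - 1, the binomial weights are the Bernstein basis polynomials `B_{n,k}` evaluated at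
x, and `piCbar` is affine in k apart from the punishment term `𝟙_{k≥1} + (n-k)/(k+1)`. The affine
part averages to its value at the mean `n x`. For the punishment term, `𝟙_{k≥1}` averages to
`1 - (1-x)^n`, and the identity `B_{n,k}(x) (n-k) x = (k+1) (1-x) B_{n,k+1}(x)` shifts the index
so that `(n-k)/(k+1)` averages to `(1-x)(1-(1-x)^n)/x`.
-/

/-- Bribery-game payoff of a focal cooperator when k of the other N−1 group
members cooperate. -/
noncomputable def piCbar (N : ℕ) (b c τ β rp α F h γ p q : ℝ) (k : ℕ) : ℝ :=
  b + F * c * ((k : ℝ) + 1) / N - c - τ -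
    α * β * τ * rp * ((if 1 ≤ k then (1 : ℝ) else 0) + ((N : ℝ) - 1 - k) / ((k : ℝ) + 1))
    - ((N : ℝ) - 1) / N * p * γ * h
    + γ * h / N * (p * k + q * ((N : ℝ) - 1 - k))

open Finset Polynomial

namespace bernsteinPolynomial

variable {R : Type*} [CommRing R]

theorem eval_eq (n k : ℕ) (x : R) :
    (bernsteinPolynomial R n k).eval x = n.choose k * x ^ k * (1 - x) ^ (n - k) := by
  simp [bernsteinPolynomial]

theorem sum_eval (n : ℕ) (x : R) :
    ∑ k ∈ range (n + 1), (bernsteinPolynomial R n k).eval x = 1 := by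
  simp [← eval_finsetSum, sum]

theorem sum_mul_eval (n : ℕ) (x : R) :
    ∑ k ∈ range (n + 1), (k : R) * (bernsteinPolynomial R n k).eval x = n * x := by
  simpa [eval_finsetSum, nsmul_eq_mul] using congrArg (eval x) (sum_smul R n)

theorem sum_eval_succ (n : ℕ) (x : R) :
    ∑ k ∈ range n, (bernsteinPolynomial R n (k + 1)).eval x = 1 - (1 - x) ^ n := by
  have h := sum_eval n x
  rw [sum_range_succ'] at h
  simp only [eval_eq n 0, Nat.choose_zero_right, Nat.cast_one, pow_zero, one_mul, Nat.sub_zero] at h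
  exact eq_sub_of_add_eq h

theorem sum_eval_mul_indicator (n : ℕ) (x : R) :
    ∑ k ∈ range (n + 1), (bernsteinPolynomial R n k).eval x * (if 1 ≤ k then 1 else 0) =
      1 - (1 - x) ^ n := by
  simp [sum_range_succ', sum_eval_succ]

theorem eval_mul_sub_mul (n k : ℕ) (x : R) :
    (bernsteinPolynomial R n k).eval x * ((n : R) - k) * x =
      (k + 1) * (1 - x) * (bernsteinPolynomial R n (k + 1)).eval x := by
  rcases lt_or_ge k n with hk | hk
  · have hc : (n.choose (k + 1) : R) * (k + 1) = n.choose k * ((n : R) - k) := by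
      simpa [Nat.cast_sub hk.le] using congrArg (Nat.cast (R := R)) (Nat.choose_succ_right_eq n k)
    obtain ⟨m, hm⟩ : ∃ m, n - k = m + 1 := ⟨n - k - 1, by omega⟩
    rw [eval_eq, eval_eq, hm, show n - (k + 1) = m by omega]
    linear_combination (x ^ (k + 1) * (1 - x) ^ (m + 1)) * hc.symm
  · rw [eq_zero_of_lt R (Nat.lt_succ_of_le hk)]
    rcases hk.eq_or_lt with rfl | hk
    · simp
    · simp [eq_zero_of_lt R hk]

theorem sum_eval_mul_affine (n : ℕ) (x a b : R) :
    ∑ k ∈ range (n + 1), (bernsteinPolynomial R n k).eval x * (a + b * k) = a + b * (n * x) := by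
  calc ∑ k ∈ range (n + 1), (bernsteinPolynomial R n k).eval x * (a + b * k)
      = a * ∑ k ∈ range (n + 1), (bernsteinPolynomial R n k).eval x +
          b * ∑ k ∈ range (n + 1), (k : R) * (bernsteinPolynomial R n k).eval x := by
        rw [mul_sum, mul_sum, ← sum_add_distrib]
        exact sum_congr rfl fun k _ => by ring
    _ = a + b * (n * x) := by rw [sum_eval, sum_mul_eval, mul_one]

theorem sum_eval_mul_div {K : Type*} [Field K] [CharZero K] (n : ℕ) {x : K} (hx : x ≠ 0) :
    ∑ k ∈ range (n + 1), (bernsteinPolynomial K n k).eval x * (((n : K) - k) / (k + 1)) =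
      (1 - x) * (1 - (1 - x) ^ n) / x := by
  have hterm (k : ℕ) : (bernsteinPolynomial K n k).eval x * (((n : K) - k) / (k + 1)) * x =
      (1 - x) * (bernsteinPolynomial K n (k + 1)).eval x := by
    have hk : (k : K) + 1 ≠ 0 := Nat.cast_add_one_ne_zero k
    rw [mul_div_assoc', div_mul_eq_mul_div, eval_mul_sub_mul, div_eq_iff hk]
    ring
  rw [eq_div_iff hx, sum_mul, sum_congr rfl fun k _ => hterm k, ← mul_sum, sum_range_succ,
    eq_zero_of_lt K n.lt_succ_self, eval_zero, add_zero, sum_eval_succ]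

theorem sum_eval_mul_indicator_add_div {K : Type*} [Field K] [CharZero K] (n : ℕ) {x : K}
    (hx : x ≠ 0) :
    ∑ k ∈ range (n + 1),
        (bernsteinPolynomial K n k).eval x * ((if 1 ≤ k then 1 else 0) + ((n : K) - k) / (k + 1)) =
      (1 - (1 - x) ^ n) / x := by
  simp only [mul_add, sum_add_distrib, sum_eval_mul_indicator, sum_eval_mul_div n hx]
  field_simp
  ring

end bernsteinPolynomial

open bernsteinPolynomial

theorem piCbar_succ (n : ℕ) (b c τ β rp α F h γ p q : ℝ) (k : ℕ) :
    piCbar (n + 1) b c τ β rp α F h γ p q k =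
      (b + F * c / (n + 1) - c - τ - n / (n + 1) * p * γ * h + γ * h / (n + 1) * (q * n) +
          (F * c + γ * h * (p - q)) / (n + 1) * k) -
        α * β * τ * rp * ((if 1 ≤ k then 1 else 0) + ((n : ℝ) - k) / (k + 1)) := by
  simp only [piCbar]
  push_cast
  ring

theorem bg_avg_payoff_cooperators_general (N : ℕ) (hN : 2 ≤ N) (b c τ β rp α F h γ p q : ℝ)
    (x : ℝ) (hx : 0 < x) :
    ∑ k ∈ Finset.range N,
      ((N - 1).choose k : ℝ) * x ^ k * (1 - x) ^ (N - 1 - k) * piCbar N b c τ β rp α F h γ p q k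
      = b + F * c * (((N : ℝ) - 1) * x + 1) / N - c - τ -
        α * β * τ * rp * (1 - (1 - x) ^ (N - 1)) / x -
        ((N : ℝ) - 1) / N * p * γ * h +
        ((N : ℝ) - 1) / N * γ * h * (p * x + q * (1 - x)) := by
  obtain ⟨n, rfl⟩ : ∃ n, N = n + 1 := ⟨N - 1, by omega⟩
  simp only [Nat.add_sub_cancel, ← eval_eq, piCbar_succ]
  rw [sum_congr rfl fun k _ => mul_sub _ _ _, sum_sub_distrib, sum_eval_mul_affine,
    sum_congr rfl fun k _ => mul_left_comm _ _ _, ← mul_sum, sum_eval_mul_indicator_add_div n hx.ne']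
  push_cast
  field_simp
  ring

/-- Average payoff of cooperators in the bribery game at cooperator frequency x ∈ (0,1]:
f̄_C(x) = b + F·c·((N−1)·x+1)/N − c − τ − α·β·τ·r_p·(1−(1−x)^{N−1})/x
  − ((N−1)/N)·p·γ·h + ((N−1)/N)·γ·h·(p·x + q·(1−x)). -/
theorem bg_avg_payoff_cooperators (N : ℕ) (hN : 2 ≤ N) (b c τ β rp α F h γ p q : ℝ)
    (hc : 0 < c) (hτ : 0 < τ) (hβ : 0 < β) (hrp : 0 < rp) (hα0 : 0 ≤ α) (hα1 : α ≤ 1)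
    (hh : 0 < h) (hγ0 : 0 < γ) (hγ1 : γ ≤ 1) (hp0 : 0 ≤ p) (hp1 : p ≤ 1)
    (hq0 : 0 ≤ q) (hq1 : q ≤ 1)
    (x : ℝ) (hx : 0 < x) (hx1 : x ≤ 1) :
    ∑ k ∈ Finset.range N,
      ((N - 1).choose k : ℝ) * x ^ k * (1 - x) ^ (N - 1 - k) * piCbar N b c τ β rp α F h γ p q k
      = b + F * c * (((N : ℝ) - 1) * x + 1) / N - c - τ -
        α * β * τ * rp * (1 - (1 - x) ^ (N - 1)) / x -
        ((N : ℝ) - 1) / N * p * γ * h +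
        ((N : ℝ) - 1) / N * γ * h * (p * x + q * (1 - x)) :=
  bg_avg_payoff_cooperators_general N hN b c τ β rp α F h γ p q x hx
end
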